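/- Let $n,k,r$ be integers with $1 < k < n-1$ and $n = kr+1$. Then the $r$-stable hypersimplex $\Delta_{n,k}^{stab(r)}$ equals the set of all $x \in \mathbb{R}^n$ satisfying $\sum_{i=1}^n x_i = k$ and $\sum_{i=\ell}^{\ell+r-1} x_i \le 1$ for every $\ell \in [n]$ (indices read modulo $n$); in particular its minimal $H$-representation in the hyperplane $\{\sum x_i = k\}$ consists of precisely these $n$ inequalities. -/

import Mathlib

/-!
An `r`-stable set meets each window of `r` cyclically consecutive positions at most once, so
the stable hypersimplex lies in the polytope cut out by the window inequalities. Conversely,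
as `n = k r + 1`, every progression `S t = {t, t - r, …, t - (k - 1) r}` is `r`-stable, and
for each `i` the `k` windows starting at `i + 1, i + 1 + r, …` tile the cycle minus `i`.
With `w ℓ` the window sum starting at `ℓ`, this tiling gives
`x = ∑ t, (1 - w (t + 1)) • χ (S t)` for every `x` of coordinate sum `k`, where `t + 1, …, t + r`
is the gap of `S t`; the weights are nonnegative by the window inequalities and add up to
`n - r k = 1`.
-/

open Finset

/-- The index `ℓ + i` taken modulo `n`, as an element of `Fin n`. -/
def cycIdx {n : ℕ} (ℓ : Fin n) (i : ℕ) : Fin n :=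
  ⟨(ℓ.val + i) % n, Nat.mod_lt _ ℓ.pos⟩

/-- The cyclic distance between `i` and `j` on the cycle with `n` vertices. -/
def cycDist {n : ℕ} (i j : Fin n) : ℕ :=
  min ((i.val + n - j.val) % n) ((j.val + n - i.val) % n)

/-- `I` is an `r`-stable `k`-subset of `[n]`: it has `k` elements, any two distinct
ones at cyclic distance at least `r`. -/
def IsStable (n k r : ℕ) (I : Finset (Fin n)) : Prop :=
  I.card = k ∧ ∀ i ∈ I, ∀ j ∈ I, i ≠ j → r ≤ cycDist i j

/-- The characteristic vector of `I ⊆ [n]`. -/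
def charVec {n : ℕ} (I : Finset (Fin n)) : Fin n → ℝ :=
  fun i => if i ∈ I then 1 else 0

/-- The `r`-stable `n,k`-hypersimplex: the convex hull of the characteristic vectors
of the `r`-stable `k`-subsets of `[n]`. -/
noncomputable def stabHS (n k r : ℕ) : Set (Fin n → ℝ) :=
  convexHull ℝ (charVec '' {I : Finset (Fin n) | IsStable n k r I})

/-- Sum of the `r` cyclically consecutive coordinates `x ℓ, x (ℓ+1), …, x (ℓ+r-1)`,
indices modulo `n`. -/
def wSum {n : ℕ} (r : ℕ) (ℓ : Fin n) (x : Fin n → ℝ) : ℝ :=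
  ∑ i ∈ Finset.range r, x (cycIdx ℓ i)

open Fin.NatCast

section Cyclic

variable {n : ℕ}

lemma cycIdx_eq_add [NeZero n] (ℓ : Fin n) (i : ℕ) : cycIdx ℓ i = ℓ + i := by
  ext
  simp [cycIdx, Fin.val_add, Nat.add_mod]

lemma natCast_inj_of_lt [NeZero n] {a b : ℕ} (ha : a < n) (hb : b < n)
    (h : (a : Fin n) = b) : a = b := by
  simpa [Fin.ext_iff, Fin.val_natCast, Nat.mod_eq_of_lt ha, Nat.mod_eq_of_lt hb] using h

lemma cycDist_comm (i j : Fin n) : cycDist i j = cycDist j i :=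
  min_comm _ _

lemma cycDist_self (i : Fin n) : cycDist i i = 0 := by
  simp [cycDist]

lemma cycDist_eq_min_val_sub (i j : Fin n) : cycDist i j = min (i - j).val (j - i).val := by
  simp only [cycDist, Fin.val_sub]
  rw [add_comm i.val, add_comm j.val, Nat.sub_add_comm j.isLt.le, Nat.sub_add_comm i.isLt.le]

lemma cycDist_self_add [NeZero n] (a : Fin n) {d : ℕ} (hd0 : 0 < d) (hdn : d < n) :
    cycDist a (a + d) = min (n - d) d := by
  rw [cycDist_eq_min_val_sub, sub_add_cancel_left, add_sub_cancel_left, Fin.val_neg',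
    Fin.val_natCast, Nat.mod_eq_of_lt hdn, Nat.mod_eq_of_lt (by omega)]

end Cyclic

section Windows

variable {n : ℕ} [NeZero n]

lemma wSum_eq_sum_add (r : ℕ) (ℓ : Fin n) (x : Fin n → ℝ) :
    wSum r ℓ x = ∑ i ∈ range r, x (ℓ + i) := by
  simp only [wSum, cycIdx_eq_add]

lemma sum_range_add_natCast (a : Fin n) (x : Fin n → ℝ) :
    ∑ m ∈ range n, x (a + m) = ∑ i, x i := by
  rw [← Fin.sum_univ_eq_sum_range (fun m => x (a + m))]
  exact Fintype.sum_equiv (Equiv.addLeft a) _ _ fun j => by simp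

lemma sum_wSum (r : ℕ) (x : Fin n → ℝ) : ∑ ℓ, wSum r ℓ x = r * ∑ i, x i := by
  simp only [wSum_eq_sum_add]
  have shift (s : ℕ) : ∑ ℓ : Fin n, x (ℓ + s) = ∑ i, x i :=
    Equiv.sum_comp (Equiv.addRight (s : Fin n)) x
  rw [sum_comm]
  simp only [shift, sum_const, card_range, nsmul_eq_mul]

lemma sum_range_wSum (r K : ℕ) (a : Fin n) (x : Fin n → ℝ) :
    ∑ j ∈ range K, wSum r (a + ((j * r : ℕ) : Fin n)) x = ∑ m ∈ range (K * r), x (a + m) := by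
  induction K with
  | zero => simp
  | succ K ih =>
    rw [sum_range_succ, ih, Nat.succ_mul, sum_range_add, wSum_eq_sum_add]
    push_cast
    simp only [add_assoc]

lemma sum_range_wSum_eq_sum_sub {k r : ℕ} (hn : n = k * r + 1) (i : Fin n)
    (x : Fin n → ℝ) :
    ∑ j ∈ range k, wSum r (i + 1 + ((j * r : ℕ) : Fin n)) x = ∑ m, x m - x i := by
  have hrange : range n = range (k * r + 1) := by rw [hn]
  rw [sum_range_wSum, ← sum_range_add_natCast i, hrange, sum_range_succ']
  push_cast
  simp only [add_zero, add_right_comm i, add_sub_cancel_right, add_assoc]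

end Windows

section StableSets

variable {n k r : ℕ}

lemma sum_charVec (I : Finset (Fin n)) : ∑ i, charVec I i = I.card := by
  simp [charVec]

lemma IsStable.wSum_charVec_le_one [NeZero n] {I : Finset (Fin n)} (hI : IsStable n k r I)
    (hrn : r ≤ n) (ℓ : Fin n) : wSum r ℓ (charVec I) ≤ 1 := by
  have hcard : ((range r).filter fun s : ℕ => ℓ + (s : Fin n) ∈ I).card ≤ 1 := by
    refine card_le_one.2 fun s hs s' hs' => ?_
    simp only [mem_filter, mem_range] at hs hs'
    by_contra hne
    wlog hlt : s < s' generalizing s s'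
    · exact this s' s hs' hs (Ne.symm hne) (by omega)
    obtain ⟨d, rfl⟩ := Nat.exists_eq_add_of_lt hlt
    have hne' : ℓ + (s : Fin n) ≠ ℓ + ((s + d + 1 : ℕ) : Fin n) := fun h =>
      hne (natCast_inj_of_lt (by omega) (by omega) (add_left_cancel h))
    have hdist := hI.2 _ hs.2 _ hs'.2 hne'
    rw [add_assoc s, Nat.cast_add, ← add_assoc, cycDist_self_add _ (by omega) (by omega)] at hdist
    omega
  simpa [wSum_eq_sum_add, charVec] using hcard

def stabSet [NeZero n] (k r : ℕ) (t : Fin n) : Finset (Fin n) :=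
  (range k).image fun j => t - ((j * r : ℕ) : Fin n)

lemma mem_stabSet [NeZero n] {i t : Fin n} :
    i ∈ stabSet k r t ↔ ∃ j < k, t = i + ((j * r : ℕ) : Fin n) := by
  simp [stabSet, sub_eq_iff_eq_add]

lemma stabSet_isStable [NeZero n] (hn : n = k * r + 1) (hr : 0 < r) (t : Fin n) :
    IsStable n k r (stabSet k r t) := by
  have key : ∀ j < k, ∀ j' < k, j ≠ j' →
      r ≤ cycDist (t - ((j * r : ℕ) : Fin n)) (t - ((j' * r : ℕ) : Fin n)) := by
    intro j hj j' hj' hne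
    wlog hlt : j' < j generalizing j j'
    · rw [cycDist_comm]; exact this j' hj' j hj hne.symm (by omega)
    obtain ⟨d, rfl⟩ := Nat.exists_eq_add_of_lt hlt
    have hgap : r ≤ (d + 1) * r ∧ (d + 1) * r + r ≤ k * r :=
      ⟨Nat.le_mul_of_pos_left r (by omega), by rw [← Nat.succ_mul]; gcongr; omega⟩
    have hshift : t - ((j' * r : ℕ) : Fin n)
        = t - (((j' + d + 1) * r : ℕ) : Fin n) + (((d + 1) * r : ℕ) : Fin n) := by
      rw [add_assoc j', add_mul, Nat.cast_add]
      abel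
    rw [hshift, cycDist_self_add _ (by omega) (by omega)]
    omega
  constructor
  · rw [stabSet, card_image_of_injOn, card_range]
    intro j hj j' hj' h
    by_contra hne
    have hdist := key j (mem_range.1 hj) j' (mem_range.1 hj') hne
    rw [show t - ((j * r : ℕ) : Fin n) = t - ((j' * r : ℕ) : Fin n) from h, cycDist_self] at hdist
    omega
  · simp only [stabSet, mem_image, mem_range]
    rintro _ ⟨j, hj, rfl⟩ _ ⟨j', hj', rfl⟩ hne
    exact key j hj j' hj' fun h => hne (h ▸ rfl)

lemma sum_smul_charVec_stabSet [NeZero n] (hn : n = k * r + 1) (hr : 0 < r)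
    {x : Fin n → ℝ} (hx : ∑ i, x i = k) :
    ∑ t, (1 - wSum r (t + 1) x) • charVec (stabSet k r t) = x := by
  funext i
  have hfilter : univ.filter (fun t => i ∈ stabSet k r t)
      = (range k).image fun j => i + ((j * r : ℕ) : Fin n) := by
    ext t
    simp [mem_stabSet, eq_comm]
  have hinj : Set.InjOn (fun j => i + ((j * r : ℕ) : Fin n)) (range k) := by
    intro j hj j' hj' h
    have hlt {m : ℕ} (hm : m ∈ (range k : Set ℕ)) : m * r < n := by
      rw [hn]
      exact Nat.lt_succ_of_le (Nat.mul_le_mul_right r (mem_range.1 hm).le)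
    exact Nat.eq_of_mul_eq_mul_right hr
      (natCast_inj_of_lt (hlt hj) (hlt hj') (add_left_cancel h))
  calc (∑ t, (1 - wSum r (t + 1) x) • charVec (stabSet k r t)) i
      = ∑ t ∈ univ.filter (fun t => i ∈ stabSet k r t), (1 - wSum r (t + 1) x) := by
        rw [Finset.sum_apply, sum_filter]
        exact sum_congr rfl fun t _ => by simp [charVec]
    _ = ∑ j ∈ range k, (1 - wSum r (i + 1 + ((j * r : ℕ) : Fin n)) x) := by
        rw [hfilter, sum_image hinj]
        simp only [add_right_comm i]
    _ = x i := by
        rw [sum_sub_distrib, sum_range_wSum_eq_sum_sub hn, hx]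
        simp

end StableSets

def windowPolytope (n k r : ℕ) : Set (Fin n → ℝ) :=
  {x | ∑ i, x i = k ∧ ∀ ℓ : Fin n, wSum r ℓ x ≤ 1}

section Polytope

variable {n k r : ℕ}

lemma isLinearMap_wSum (r : ℕ) (ℓ : Fin n) : IsLinearMap ℝ (wSum r ℓ) :=
  ⟨fun x y => by simp [wSum, sum_add_distrib], fun c x => by simp [wSum, mul_sum]⟩

lemma convex_windowPolytope : Convex ℝ (windowPolytope n k r) := by
  have hsum : IsLinearMap ℝ fun x : Fin n → ℝ => ∑ i, x i :=
    ⟨fun x y => sum_add_distrib, fun c x => by simp [mul_sum]⟩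
  simp only [windowPolytope, Set.ofPred_and, Set.ofPred_forall]
  exact (convex_hyperplane hsum _).inter
    (convex_iInter fun ℓ => convex_halfSpace_le (isLinearMap_wSum r ℓ) 1)

lemma stabHS_subset_windowPolytope [NeZero n] (hrn : r ≤ n) :
    stabHS n k r ⊆ windowPolytope n k r := by
  refine convexHull_min ?_ convex_windowPolytope
  rintro _ ⟨I, hI, rfl⟩
  exact ⟨by rw [sum_charVec, hI.1], hI.wSum_charVec_le_one hrn⟩

lemma windowPolytope_subset_stabHS [NeZero n] (hn : n = k * r + 1) (hr : 0 < r) :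
    windowPolytope n k r ⊆ stabHS n k r := by
  rintro x ⟨hsum, hw⟩
  have hweights : ∑ t : Fin n, (1 - wSum r (t + 1) x) = 1 := by
    have hshift : ∑ t : Fin n, wSum r (t + 1) x = ∑ ℓ, wSum r ℓ x :=
      Equiv.sum_comp (Equiv.addRight (1 : Fin n)) fun ℓ => wSum r ℓ x
    rw [sum_sub_distrib, hshift, sum_wSum, hsum,
      sum_const, card_univ, Fintype.card_fin, nsmul_one, hn]
    push_cast
    ring
  rw [← sum_smul_charVec_stabSet hn hr hsum]
  exact (convex_convexHull ℝ _).sum_mem (fun t _ => sub_nonneg.2 (hw _)) hweights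
    fun t _ => subset_convexHull ℝ _ ⟨_, stabSet_isStable hn hr t, rfl⟩

end Polytope

theorem stmt7_general (n k r : ℕ) (hkn : k < n - 1) (hn : n = k * r + 1) :
    stabHS n k r = {x : Fin n → ℝ | (∑ i, x i) = (k : ℝ) ∧
      ∀ ℓ : Fin n, wSum r ℓ x ≤ 1} := by
  have hr : 0 < r := Nat.pos_of_ne_zero fun h => by simp [h] at hn; omega
  have hk : 0 < k := Nat.pos_of_ne_zero fun h => by simp [h] at hn; omega
  have hrn : r ≤ n := hn ▸ Nat.le_succ_of_le (Nat.le_mul_of_pos_left r hk)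
  have : NeZero n := ⟨by omega⟩
  exact (stabHS_subset_windowPolytope hrn).antisymm (windowPolytope_subset_stabHS hn hr)

/-- for `1 < k < n-1` and `n = kr + 1`, the `r`-stable hypersimplex is
exactly the set of points with coordinate sum `k` all of whose cyclic windows of `r`
consecutive coordinates sum to at most `1`. -/
theorem stmt7 (n k r : ℕ) (hk : 1 < k) (hkn : k < n - 1) (hn : n = k * r + 1) :
    stabHS n k r = {x : Fin n → ℝ | (∑ i, x i) = (k : ℝ) ∧
      ∀ ℓ : Fin n, wSum r ℓ x ≤ 1} :=
  stmt7_general n k r hkn hn
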